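/- For every positive integer n there exists a constant C₀ > 0 depending only on n with the following property. Let 0 < r ≤ 1, ε > 0, C > 0, and let v be a smooth real-valued function on the closed ball B̄ = closedBall(0,r) ⊂ ℝⁿ satisfying v(0) + ε ≤ inf_{|x| = r} v(x). Define P = { x ∈ ball(0,r) : |Dv(x)| < ε/2 and v(y) ≥ v(x) + Dv(x)·(y − x) for all y ∈ ball(0,r) }, and assume that det(D²v(x)) ≤ C for every x ∈ P. Then the Lebesgue measure of the set { x ∈ ball(0,r) : v(x) ≤ v(0) + ε/2 } is at least εⁿ/(C₀·C). -/

import Mathlib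

open MeasureTheory Metric

/-- The Hessian matrix of second partial derivatives of `v : ℝⁿ → ℝ` at `x`. -/
noncomputable def hessianMatrix {n : ℕ} (v : EuclideanSpace ℝ (Fin n) → ℝ)
    (x : EuclideanSpace ℝ (Fin n)) : Matrix (Fin n) (Fin n) ℝ :=
  Matrix.of fun i j =>
    fderiv ℝ (fun y => fderiv ℝ v y (EuclideanSpace.single j (1 : ℝ))) x
      (EuclideanSpace.single i (1 : ℝ))


open MeasureTheory Metric Filter Topology Set InnerProductSpace Matrix

noncomputable section Aux

variable {n : ℕ}

local notation "E" => EuclideanSpace ℝ (Fin n)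
local notation "⟪" x ", " y "⟫" => @inner ℝ _ _ x y

abbrev euclBase (i : Fin n) : EuclideanSpace ℝ (Fin n) := EuclideanSpace.single i (1:ℝ)

lemma hessian_entry {v : EuclideanSpace ℝ (Fin n) → ℝ} {x : E}
    (hv : ContDiffAt ℝ (⊤ : ℕ∞) v x) (i j : Fin n) :
    hessianMatrix v x i j = (fderiv ℝ (fderiv ℝ v) x (euclBase i)) (euclBase j) := by
  have hd : DifferentiableAt ℝ (fderiv ℝ v) x :=
    (hv.fderiv_right ((by exact WithTop.coe_le_coe.mpr le_top))).differentiableAt one_ne_zero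
  have : fderiv ℝ (fun y => fderiv ℝ v y (euclBase j)) x =
      ((fderiv ℝ v x).comp (fderiv ℝ (fun _ => euclBase j) x)) +
        (fderiv ℝ (fderiv ℝ v) x).flip (euclBase j) :=
    fderiv_clm_apply hd (differentiableAt_const _)
  show fderiv ℝ (fun y => fderiv ℝ v y (euclBase j)) x (euclBase i) = _
  rw [this]
  simp

end Aux

noncomputable section Aux2

variable {n : ℕ}

local notation "E" => EuclideanSpace ℝ (Fin n)
local notation "⟪" x ", " y "⟫" => @inner ℝ _ _ x y

/-- `(toDual ℝ E).symm` as a continuous `ℝ`-linear map. -/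
def toDualSymmCLM : StrongDual ℝ (EuclideanSpace ℝ (Fin n)) →L[ℝ] EuclideanSpace ℝ (Fin n) :=
  { toFun := (toDual ℝ (EuclideanSpace ℝ (Fin n))).symm,
    map_add' := fun a b => map_add _ a b,
    map_smul' := fun c q => by
      have := (toDual ℝ (EuclideanSpace ℝ (Fin n))).symm.map_smulₛₗ c q
      simpa [starRingEnd_apply] using this,
    cont := (toDual ℝ (EuclideanSpace ℝ (Fin n))).symm.continuous }

@[simp] lemma toDualSymmCLM_apply (q : StrongDual ℝ (EuclideanSpace ℝ (Fin n))) :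
    (toDualSymmCLM (n := n)) q = (toDual ℝ (EuclideanSpace ℝ (Fin n))).symm q := rfl

lemma grad_hasFDerivAt {v : EuclideanSpace ℝ (Fin n) → ℝ} {x : E}
    (hv : ContDiffAt ℝ (⊤ : ℕ∞) v x) :
    HasFDerivAt (gradient v)
      ((toDualSymmCLM (n := n)).comp (fderiv ℝ (fderiv ℝ v) x)) x := by
  have hd : HasFDerivAt (fderiv ℝ v) (fderiv ℝ (fderiv ℝ v) x) x :=
    (((hv.fderiv_right ((by exact WithTop.coe_le_coe.mpr le_top))).differentiableAt one_ne_zero)).hasFDerivAt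
  exact ((toDualSymmCLM (n := n)).hasFDerivAt).comp x hd

lemma grad_det_eq {v : EuclideanSpace ℝ (Fin n) → ℝ} {x : E}
    (hv : ContDiffAt ℝ (⊤ : ℕ∞) v x) :
    (fderiv ℝ (gradient v) x).det = (hessianMatrix v x).det := by
  rw [(grad_hasFDerivAt hv).fderiv]
  set L : EuclideanSpace ℝ (Fin n) →L[ℝ] EuclideanSpace ℝ (Fin n) :=
    (toDualSymmCLM (n := n)).comp (fderiv ℝ (fderiv ℝ v) x) with hLdef
  set b := (EuclideanSpace.basisFun (Fin n) ℝ).toBasis with hb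
  have hL : LinearMap.toMatrix b b
      (L : EuclideanSpace ℝ (Fin n) →ₗ[ℝ] EuclideanSpace ℝ (Fin n)) = (hessianMatrix v x)ᵀ := by
    ext i j
    rw [LinearMap.toMatrix_apply]
    have h1 : ((L : EuclideanSpace ℝ (Fin n) →ₗ[ℝ] EuclideanSpace ℝ (Fin n)) (b j)) =
        (toDual ℝ (EuclideanSpace ℝ (Fin n))).symm (fderiv ℝ (fderiv ℝ v) x (euclBase j)) := by
      simp [hLdef, hb, EuclideanSpace.basisFun_apply, euclBase]
    rw [h1]
    have h2 : ∀ w : EuclideanSpace ℝ (Fin n), b.repr w i = w i := fun w => rfl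
    rw [h2]
    have h3 : ((toDual ℝ (EuclideanSpace ℝ (Fin n))).symm
        (fderiv ℝ (fderiv ℝ v) x (euclBase j))) i =
        ⟪euclBase i, (toDual ℝ (EuclideanSpace ℝ (Fin n))).symm
          (fderiv ℝ (fderiv ℝ v) x (euclBase j))⟫ := by
      rw [EuclideanSpace.inner_single_left]; simp
    rw [h3, real_inner_comm, toDual_symm_apply, Matrix.transpose_apply,
      hessian_entry hv j i]
  show LinearMap.det (L : EuclideanSpace ℝ (Fin n) →ₗ[ℝ] EuclideanSpace ℝ (Fin n)) = _
  rw [← LinearMap.det_toMatrix b, hL, Matrix.det_transpose]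

end Aux2


section Aux3

open Filter Topology Set

lemma secondDeriv_nonneg_of_localMin {φ φ' : ℝ → ℝ} {b : ℝ}
    (hφ : ∀ᶠ t in 𝓝 (0:ℝ), HasDerivAt φ (φ' t) t)
    (hφ'' : HasDerivAt φ' b 0)
    (hmin : ∀ᶠ t in 𝓝 (0:ℝ), φ 0 ≤ φ t) : 0 ≤ b := by
  have h0 : φ' 0 = 0 := by
    have : IsLocalMin φ 0 := hmin
    exact this.hasDerivAt_eq_zero (hφ.self_of_nhds)
  obtain ⟨δ, hδ, hball⟩ := Metric.eventually_nhds_iff.mp (hφ.and hmin)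
  have key : ∀ t : ℝ, 0 < t → t < δ → ∃ c, 0 < c ∧ c < t ∧ 0 ≤ φ' c := by
    intro t ht htδ
    have hder : ∀ s ∈ Ioo (0:ℝ) t, HasDerivAt φ (φ' s) s := by
      intro s hs
      exact (hball (y := s) (by rw [Real.dist_eq, sub_zero, abs_of_pos hs.1]; linarith [hs.2])).1
    have hcont : ContinuousOn φ (Icc 0 t) := by
      intro s hs
      exact ((hball (y := s) (by rw [Real.dist_eq, sub_zero, abs_of_nonneg hs.1]; linarith [hs.2])).1).continuousAt.continuousWithinAt
    obtain ⟨c, hc, hc'⟩ := exists_hasDerivAt_eq_slope φ φ' ht hcont hder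
    refine ⟨c, hc.1, hc.2, ?_⟩
    rw [hc']
    have hφt : φ 0 ≤ φ t := (hball (y := t) (by rw [Real.dist_eq, sub_zero, abs_of_pos ht]; exact htδ)).2
    apply div_nonneg (by linarith) (by linarith)
  have hseq : ∀ k : ℕ, ∃ c, 0 < c ∧ c < min δ 1 / (k + 2) ∧ 0 ≤ φ' c := by
    intro k
    refine key _ (by positivity) ?_
    have h1 : min δ 1 / (k + 2 : ℝ) ≤ min δ 1 / 2 := by
      apply div_le_div_of_nonneg_left (le_of_lt (lt_min hδ one_pos)) two_pos (by norm_num)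
    have h2 : min δ 1 ≤ δ := min_le_left _ _
    have h3 : 0 < min δ 1 := lt_min hδ one_pos
    linarith
  choose c hc1 hc2 hc3 using hseq
  -- c tends to 0 within {x | x ≠ 0}
  have hc0 : Tendsto c atTop (𝓝[≠] (0:ℝ)) := by
    rw [tendsto_nhdsWithin_iff]
    constructor
    · apply squeeze_zero (fun k => (hc1 k).le) (fun k => (hc2 k).le)
      apply Tendsto.div_atTop tendsto_const_nhds
      exact tendsto_atTop_add_const_right _ 2 tendsto_natCast_atTop_atTop
    · exact Eventually.of_forall fun k => (hc1 k).ne'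
  have hslope : Tendsto (fun k => (φ' (c k) - φ' 0) / (c k - 0)) atTop (𝓝 b) := by
    have := hasDerivAt_iff_tendsto_slope.mp hφ''
    have h2 := this.comp hc0
    convert h2 using 2 with k
    simp [slope_def_field, div_eq_inv_mul]
  refine ge_of_tendsto hslope (Eventually.of_forall fun k => ?_)
  rw [h0, sub_zero, sub_zero]
  exact div_nonneg (hc3 k) (hc1 k).le

end Aux3

noncomputable section Aux4

variable {n : ℕ}

local notation "E" => EuclideanSpace ℝ (Fin n)
local notation "⟪" x ", " y "⟫" => @inner ℝ _ _ x y

lemma hessian_psd {v : EuclideanSpace ℝ (Fin n) → ℝ} {x : E} {s : Set (EuclideanSpace ℝ (Fin n))}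
    (hs : IsOpen s) (hx : x ∈ s) (hv : ContDiffOn ℝ (⊤ : ℕ∞) v s)
    (hcontact : ∀ y ∈ s, v x + ⟪gradient v x, y - x⟫ ≤ v y) :
    (hessianMatrix v x).PosSemidef := by
  have hCA : ∀ y ∈ s, ContDiffAt ℝ (⊤ : ℕ∞) v y := fun y hy => (hv y hy).contDiffAt (hs.mem_nhds hy)
  set Bx := fderiv ℝ (fderiv ℝ v) x with hBx
  have hBsymm : ∀ a b : EuclideanSpace ℝ (Fin n), Bx a b = Bx b a := by
    intro a b
    apply second_derivative_symmetric_of_eventually (f := v) (f' := fderiv ℝ v) (x := x)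
    · filter_upwards [hs.mem_nhds hx] with y hy
      exact ((hCA y hy).differentiableAt (by simp)).hasFDerivAt
    · exact (((hCA x hx).fderiv_right (by exact WithTop.coe_le_coe.mpr le_top)).differentiableAt one_ne_zero).hasFDerivAt
  -- the quadratic form of the second derivative is nonnegative
  have hquad : ∀ u : EuclideanSpace ℝ (Fin n), 0 ≤ Bx u u := by
    intro u
    set c : ℝ := ⟪gradient v x, u⟫ with hc
    set ℓ : ℝ → EuclideanSpace ℝ (Fin n) := fun t => x + t • u with hℓ
    have hℓder : ∀ t : ℝ, HasDerivAt ℓ u t := by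
      intro t
      have h1 : HasDerivAt (fun t : ℝ => t • u) ((1:ℝ) • u) t := (hasDerivAt_id t).smul_const u
      simpa [hℓ] using h1.const_add x
    have hℓ0 : ℓ 0 = x := by simp [hℓ]
    have hev : ∀ᶠ t : ℝ in 𝓝 0, ℓ t ∈ s := by
      have : ContinuousAt ℓ 0 := (hℓder 0).continuousAt
      have := this.preimage_mem_nhds (hs.mem_nhds (by rw [hℓ0]; exact hx))
      exact this
    set φ : ℝ → ℝ := fun t => v (ℓ t) - (v x + t * c) with hφdef
    set φ' : ℝ → ℝ := fun t => fderiv ℝ v (ℓ t) u - c with hφ'def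
    have hφ : ∀ᶠ t in 𝓝 (0:ℝ), HasDerivAt φ (φ' t) t := by
      filter_upwards [hev] with t ht
      have hvd : HasFDerivAt v (fderiv ℝ v (ℓ t)) (ℓ t) :=
        ((hCA _ ht).differentiableAt (by simp)).hasFDerivAt
      have h1 : HasDerivAt (fun t => v (ℓ t)) (fderiv ℝ v (ℓ t) u) t :=
        hvd.comp_hasDerivAt t (hℓder t)
      have h2 : HasDerivAt (fun t : ℝ => v x + t * c) c t := by
        simpa using (hasDerivAt_mul_const (x := t) c).const_add (v x)
      exact h1.sub h2
    have hφ'' : HasDerivAt φ' (Bx u u) 0 := by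
      have hBd : HasFDerivAt (fderiv ℝ v) Bx x :=
        (((hCA x hx).fderiv_right (by exact WithTop.coe_le_coe.mpr le_top)).differentiableAt one_ne_zero).hasFDerivAt
      have hBd' : HasFDerivAt (fderiv ℝ v) Bx (ℓ 0) := by rwa [hℓ0]
      have h1 : HasDerivAt (fun t => fderiv ℝ v (ℓ t)) (Bx u) 0 :=
        hBd'.comp_hasDerivAt 0 (hℓder 0)
      have h2 : HasDerivAt (fun t => fderiv ℝ v (ℓ t) u) ((Bx u) u) 0 := by
        have := (ContinuousLinearMap.apply ℝ ℝ u).hasFDerivAt.comp_hasDerivAt 0 h1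
        exact this
      simpa [hφ'def] using h2.sub_const c
    have hmin : ∀ᶠ t in 𝓝 (0:ℝ), φ 0 ≤ φ t := by
      filter_upwards [hev] with t ht
      have h1 := hcontact (ℓ t) ht
      have h2 : ℓ t - x = t • u := by simp [hℓ]
      rw [h2, real_inner_smul_right, ← hc] at h1
      have hφ0 : φ 0 = 0 := by simp [hφdef, hℓ0]
      rw [hφ0]
      simp only [hφdef]
      linarith
    exact secondDeriv_nonneg_of_localMin hφ hφ'' hmin
  constructor
  · show (hessianMatrix v x).conjTranspose = _
    ext i j
    simp only [Matrix.conjTranspose_apply, star_trivial]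
    rw [hessian_entry (hCA x hx) j i, hessian_entry (hCA x hx) i j]
    exact hBsymm _ _
  · intro w
    set u : EuclideanSpace ℝ (Fin n) := (WithLp.equiv 2 (Fin n → ℝ)).symm w with hu
    have hui : ∀ i, u i = w i := fun i => rfl
    have hdecomp : u = ∑ i, w i • euclBase i := by
      conv_lhs => rw [← ((EuclideanSpace.basisFun (Fin n) ℝ)).toBasis.sum_repr u]
      apply Finset.sum_congr rfl
      intro i _
      rw [OrthonormalBasis.coe_toBasis_repr_apply, EuclideanSpace.basisFun_repr, hui i,
        OrthonormalBasis.coe_toBasis, EuclideanSpace.basisFun_apply]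
    have hexp : Bx u u = ∑ i, ∑ j, w i * (w j * Bx (euclBase i) (euclBase j)) := by
      conv_lhs => rw [hdecomp]
      simp only [map_sum, _root_.map_smul, ContinuousLinearMap.coe_sum', Finset.sum_apply,
        ContinuousLinearMap.coe_smul', Pi.smul_apply, smul_eq_mul]
      rw [Finset.sum_comm]
      apply Finset.sum_congr rfl
      intro i _
      rw [Finset.mul_sum]
      apply Finset.sum_congr rfl
      intro j _
      ring
    have h0 : 0 ≤ Bx u u := hquad u
    rw [hexp] at h0
    show (0:ℝ) ≤ w.sum fun i xi => w.sum fun j xj => star xi * hessianMatrix v x i j * xj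
    have : (w.sum fun i xi => w.sum fun j xj => star xi * hessianMatrix v x i j * xj) =
        ∑ i, ∑ j, w i * (w j * Bx (euclBase i) (euclBase j)) := by
      rw [Finsupp.sum_fintype _ _ (by simp)]
      apply Finset.sum_congr rfl
      intro i _
      rw [Finsupp.sum_fintype _ _ (by simp), star_trivial]
      apply Finset.sum_congr rfl
      intro j _
      rw [hessian_entry (hCA x hx) i j]
      ring
    rw [this]
    exact h0

end Aux4

lemma posSemidef_det_nonneg {m : ℕ} {M : Matrix (Fin m) (Fin m) ℝ} (h : M.PosSemidef) :
    0 ≤ M.det := by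
  rw [h.1.det_eq_prod_eigenvalues]
  apply Finset.prod_nonneg
  intro i _
  simpa using h.eigenvalues_nonneg i

/-- The measure lower bound obtained from Szekelyhidi's ABP estimate under the key estimate
`det D²v ≤ C` on the contact set `P`: the set `{v ≤ v 0 + ε/2}` has measure at least
`εⁿ/(C₀ C)`. -/
theorem abp_measure_lower_bound (n : ℕ) (hn : 0 < n) :
    ∃ C₀ : ℝ, 0 < C₀ ∧
      ∀ (r ε C : ℝ) (v : EuclideanSpace ℝ (Fin n) → ℝ),
        0 < r → r ≤ 1 → 0 < ε → 0 < C →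
        ContDiffOn ℝ (⊤ : ℕ∞) v (closedBall (0 : EuclideanSpace ℝ (Fin n)) r) →
        (∀ x ∈ sphere (0 : EuclideanSpace ℝ (Fin n)) r, v 0 + ε ≤ v x) →
        (∀ x ∈ {x ∈ ball (0 : EuclideanSpace ℝ (Fin n)) r |
            ‖gradient v x‖ < ε / 2 ∧
            ∀ y ∈ ball (0 : EuclideanSpace ℝ (Fin n)) r,
              v x + inner ℝ (gradient v x) (y - x) ≤ v y},
          (hessianMatrix v x).det ≤ C) →
        ENNReal.ofReal (ε ^ n / (C₀ * C)) ≤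
          volume {x ∈ ball (0 : EuclideanSpace ℝ (Fin n)) r | v x ≤ v 0 + ε / 2} := by
  haveI : Nontrivial (EuclideanSpace ℝ (Fin n)) := by
    apply Module.nontrivial_of_finrank_pos (R := ℝ)
    rwa [finrank_euclideanSpace_fin]
  set ω : ENNReal := volume (ball (0 : EuclideanSpace ℝ (Fin n)) 1) with hω
  have hω0 : ω ≠ 0 := (measure_ball_pos _ _ one_pos).ne'
  have hωt : ω ≠ ⊤ := measure_ball_lt_top.ne
  have hωR : 0 < ω.toReal := ENNReal.toReal_pos hω0 hωt
  refine ⟨2 ^ n / ω.toReal, by positivity, ?_⟩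
  intro r ε C v hr hr1 hε hC hv hbd hkey
  set C₀ : ℝ := 2 ^ n / ω.toReal with hC₀def
  set P : Set (EuclideanSpace ℝ (Fin n)) :=
    {x ∈ ball (0 : EuclideanSpace ℝ (Fin n)) r |
      ‖gradient v x‖ < ε / 2 ∧
      ∀ y ∈ ball (0 : EuclideanSpace ℝ (Fin n)) r,
        v x + inner ℝ (gradient v x) (y - x) ≤ v y} with hPdef
  have hCA : ∀ x ∈ ball (0 : EuclideanSpace ℝ (Fin n)) r, ContDiffAt ℝ (⊤ : ℕ∞) v x := fun x hx =>
    (hv x (ball_subset_closedBall hx)).contDiffAt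
      (Filter.mem_of_superset (isOpen_ball.mem_nhds hx) ball_subset_closedBall)
  -- continuity of the gradient on the open ball
  have hgc : ContinuousOn (gradient v) (ball (0 : EuclideanSpace ℝ (Fin n)) r) := by
    intro x hx
    have h1 : ContinuousAt (fderiv ℝ v) x :=
      ((hCA x hx).fderiv_right (m := 0) ((by simp))).continuousAt
    exact (((toDual ℝ (EuclideanSpace ℝ (Fin n))).symm.continuous.continuousAt).comp
      h1).continuousWithinAt
  -- P is contained in the sublevel set
  have hPsub : P ⊆ {x ∈ ball (0 : EuclideanSpace ℝ (Fin n)) r | v x ≤ v 0 + ε / 2} := by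
    rintro x ⟨hxb, hgrad, hcon⟩
    refine ⟨hxb, ?_⟩
    have h0b : (0 : EuclideanSpace ℝ (Fin n)) ∈ ball (0 : EuclideanSpace ℝ (Fin n)) r :=
      mem_ball_self hr
    have h1 := hcon 0 h0b
    have h2 : |inner ℝ (gradient v x) ((0 : EuclideanSpace ℝ (Fin n)) - x)| ≤
        ‖gradient v x‖ * ‖(0 : EuclideanSpace ℝ (Fin n)) - x‖ :=
      abs_real_inner_le_norm _ _
    have h3 : ‖(0 : EuclideanSpace ℝ (Fin n)) - x‖ = ‖x‖ := by rw [zero_sub, norm_neg]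
    have h4 : ‖x‖ < r := mem_ball_zero_iff.mp hxb
    have h5 : (0:ℝ) ≤ ‖gradient v x‖ := norm_nonneg _
    have h6 : (0:ℝ) ≤ ‖x‖ := norm_nonneg _
    rw [h3] at h2
    have h7 : ‖gradient v x‖ * ‖x‖ ≤ (ε/2) * 1 := by
      apply mul_le_mul hgrad.le (by linarith) h6 (by linarith)
    have h8 := abs_le.mp h2
    linarith [h8.1, h8.2]
  -- P is measurable
  have hPm : MeasurableSet P := by
    obtain ⟨D, hDsub, hDc, hDclos⟩ :=
      EMetric.subset_countable_closure_of_compact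
        (isCompact_closedBall (0 : EuclideanSpace ℝ (Fin n)) r)
    have hext : ∀ x ∈ ball (0 : EuclideanSpace ℝ (Fin n)) r,
        ∀ S : Set (EuclideanSpace ℝ (Fin n)), S ⊆ closedBall 0 r →
        closedBall (0 : EuclideanSpace ℝ (Fin n)) r ⊆ closure S →
        (∀ y ∈ S, v x + inner ℝ (gradient v x) (y - x) ≤ v y) →
        ∀ y ∈ closedBall (0 : EuclideanSpace ℝ (Fin n)) r,
          v x + inner ℝ (gradient v x) (y - x) ≤ v y := by
      intro x hx S hS hSc hcond y hy
      have hcont : ContinuousOn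
          (fun y => v y - (v x + inner ℝ (gradient v x) (y - x)))
          (closedBall (0 : EuclideanSpace ℝ (Fin n)) r) :=
        (hv.continuousOn).sub (continuousOn_const.add (continuousOn_const.inner
          ((continuous_id.sub continuous_const).continuousOn)))
      have hK : IsClosed (closedBall (0 : EuclideanSpace ℝ (Fin n)) r ∩
          (fun y => v y - (v x + inner ℝ (gradient v x) (y - x))) ⁻¹' (Ici 0)) :=
        hcont.preimage_isClosed_of_isClosed Metric.isClosed_closedBall isClosed_Ici
      have hSK : S ⊆ closedBall (0 : EuclideanSpace ℝ (Fin n)) r ∩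
          (fun y => v y - (v x + inner ℝ (gradient v x) (y - x))) ⁻¹' (Ici 0) := by
        intro z hz
        refine ⟨hS hz, ?_⟩
        simp only [mem_preimage, mem_Ici, sub_nonneg]
        exact hcond z hz
      have hcl := hK.closure_subset_iff.mpr hSK
      have hyK := hcl (hSc hy)
      have h2 := hyK.2
      simp only [mem_preimage, mem_Ici, sub_nonneg] at h2
      exact h2
    have hDne : D.Nonempty := by
      have h0 : (0 : EuclideanSpace ℝ (Fin n)) ∈ closure D :=
        hDclos (mem_closedBall_self hr.le)
      rcases eq_empty_or_nonempty D with hD | hD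
      · rw [hD, closure_empty] at h0; exact absurd h0 (notMem_empty _)
      · exact hD
    have hPeq : P = (ball (0 : EuclideanSpace ℝ (Fin n)) r ∩
        {x | ‖gradient v x‖ < ε/2}) ∩
        ⋂ y ∈ D, (ball (0 : EuclideanSpace ℝ (Fin n)) r ∩
          {x | v x + inner ℝ (gradient v x) (y - x) ≤ v y}) := by
      ext x
      simp only [hPdef, mem_setOf_eq, mem_inter_iff, mem_iInter]
      constructor
      · rintro ⟨hxb, hgr, hcon⟩
        refine ⟨⟨hxb, hgr⟩, fun y hy => ⟨hxb, ?_⟩⟩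
        exact hext x hxb (ball 0 r) ball_subset_closedBall
          (le_of_eq (closure_ball (0 : EuclideanSpace ℝ (Fin n)) hr.ne').symm)
          hcon y (hDsub hy)
      · rintro ⟨⟨hxb, hgr⟩, hcon⟩
        refine ⟨hxb, hgr, fun y hy => ?_⟩
        exact hext x hxb D hDsub hDclos (fun z hz => (hcon z hz).2) y
          (ball_subset_closedBall hy)
    rw [hPeq]
    apply MeasurableSet.inter
    · apply IsOpen.measurableSet
      exact (hgc.norm).isOpen_inter_preimage isOpen_ball isOpen_Iio
    · apply MeasurableSet.biInter hDc
      intro y hy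
      have heq : ball (0 : EuclideanSpace ℝ (Fin n)) r ∩
          {x | v x + inner ℝ (gradient v x) (y - x) ≤ v y} =
          ball (0 : EuclideanSpace ℝ (Fin n)) r \          (ball (0 : EuclideanSpace ℝ (Fin n)) r ∩
            ((fun x => v x + inner ℝ (gradient v x) (y - x)) ⁻¹' Ioi (v y))) := by
        ext z
        simp only [mem_inter_iff, mem_diff, mem_setOf_eq, mem_preimage, mem_Ioi]
        constructor
        · rintro ⟨hz1, hz2⟩; exact ⟨hz1, fun h => absurd hz2 (not_le.mpr h.2)⟩
        · rintro ⟨hz1, hz2⟩; exact ⟨hz1, not_lt.mp (fun h => hz2 ⟨hz1, h⟩)⟩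
      rw [heq]
      apply MeasurableSet.diff measurableSet_ball
      apply IsOpen.measurableSet
      apply ContinuousOn.isOpen_inter_preimage ?_ isOpen_ball isOpen_Ioi
      exact ((hv.continuousOn.mono ball_subset_closedBall)).add
        (hgc.inner ((continuous_const.sub continuous_id).continuousOn))
  -- the ball of radius ε/2 is covered by the gradient image of P
  have hcover : ball (0 : EuclideanSpace ℝ (Fin n)) (ε/2) ⊆ gradient v '' P := by
    intro p hp
    have hpn : ‖p‖ < ε / 2 := mem_ball_zero_iff.mp hp
    set f : EuclideanSpace ℝ (Fin n) → ℝ := fun y => v y - inner ℝ p y with hfdef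
    have hfc : ContinuousOn f (closedBall (0 : EuclideanSpace ℝ (Fin n)) r) := by
      apply (hv.continuousOn).sub
      exact (continuous_const.inner continuous_id).continuousOn
    obtain ⟨x₀, hx₀mem, hx₀min⟩ := (isCompact_closedBall (0 : EuclideanSpace ℝ (Fin n))
      r).exists_isMinOn ⟨0, mem_closedBall_self hr.le⟩ hfc
    have hx₀ball : x₀ ∈ ball (0 : EuclideanSpace ℝ (Fin n)) r := by
      by_contra hcon
      have hsp : x₀ ∈ sphere (0 : EuclideanSpace ℝ (Fin n)) r := by
        rw [mem_sphere_zero_iff_norm]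
        have := mem_closedBall_zero_iff.mp hx₀mem
        have := mem_ball_zero_iff.not.mp hcon
        linarith [not_lt.mp this]
      have h1 := hbd x₀ hsp
      have h2 := hx₀min (mem_closedBall_self hr.le)
      simp only [hfdef, inner_zero_right] at h2
      have h3 : |(inner ℝ p x₀ : ℝ)| ≤ ‖p‖ * ‖x₀‖ := abs_real_inner_le_norm _ _
      have h4 : ‖x₀‖ = r := mem_sphere_zero_iff_norm.mp hsp
      rw [h4] at h3
      have h5 : ‖p‖ * r ≤ (ε/2) * 1 :=
        mul_le_mul hpn.le hr1 hr.le (by linarith)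
      have h6 := abs_le.mp h3
      have h7 : v x₀ - (inner ℝ p x₀ : ℝ) ≤ v 0 - 0 := by simpa [hfdef] using h2
      linarith [h6.1, h6.2]
    have hvd : DifferentiableAt ℝ v x₀ := (hCA x₀ hx₀ball).differentiableAt (by simp)
    have hloc : IsLocalMin f x₀ := hx₀min.isLocalMin
      (Filter.mem_of_superset (isOpen_ball.mem_nhds hx₀ball) ball_subset_closedBall)
    have hdf : fderiv ℝ f x₀ = 0 := hloc.fderiv_eq_zero
    have hfd : fderiv ℝ f x₀ = fderiv ℝ v x₀ - innerSL ℝ p := by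
      rw [hfdef]
      have : (fun y => v y - (inner ℝ p y : ℝ)) = fun y => v y - (innerSL ℝ p) y := rfl
      rw [this, fderiv_fun_sub hvd (innerSL ℝ p).differentiableAt, (innerSL ℝ p).fderiv]
    have hveq : fderiv ℝ v x₀ = innerSL ℝ p := by
      rw [hfd] at hdf
      have := sub_eq_zero.mp hdf
      exact this
    have hgrad : gradient v x₀ = p := by
      have h1 : HasGradientAt v p x₀ := by
        rw [hasGradientAt_iff_hasFDerivAt]
        have h2 : toDual ℝ (EuclideanSpace ℝ (Fin n)) p = innerSL ℝ p := by
          ext y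
          rw [toDual_apply_apply]
          rfl
        rw [h2, ← hveq]
        exact hvd.hasFDerivAt
      exact h1.gradient
    refine ⟨x₀, ⟨hx₀ball, ?_, ?_⟩, hgrad⟩
    · rw [hgrad]; exact hpn
    · intro y hy
      have := hx₀min (ball_subset_closedBall hy)
      simp only [hfdef] at this
      rw [hgrad, inner_sub_right]
      have : v x₀ - (inner ℝ p x₀ : ℝ) ≤ v y - inner ℝ p y := this
      linarith
  -- ABP-type estimate from the Jacobian bound
  have himg : volume (gradient v '' P) ≤ ENNReal.ofReal C * volume P := by
    have hder : ∀ x ∈ P, HasFDerivWithinAt (gradient v)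
        ((toDualSymmCLM (n := n)).comp (fderiv ℝ (fderiv ℝ v) x)) P x := fun x hx =>
      (grad_hasFDerivAt (hCA x hx.1)).hasFDerivWithinAt
    calc volume (gradient v '' P)
        ≤ ∫⁻ x in P, ENNReal.ofReal
            |((toDualSymmCLM (n := n)).comp (fderiv ℝ (fderiv ℝ v) x)).det| ∂volume :=
          addHaar_image_le_lintegral_abs_det_fderiv volume hPm hder
      _ ≤ ∫⁻ _ in P, ENNReal.ofReal C ∂volume := by
          apply setLIntegral_mono_ae measurable_const.aemeasurable
          apply Filter.Eventually.of_forall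
          intro x hx
          apply ENNReal.ofReal_le_ofReal
          have hdet : ((toDualSymmCLM (n := n)).comp (fderiv ℝ (fderiv ℝ v) x)).det =
              (hessianMatrix v x).det := by
            rw [← (grad_hasFDerivAt (hCA x hx.1)).fderiv]
            exact grad_det_eq (hCA x hx.1)
          rw [hdet]
          have hpsd : (hessianMatrix v x).PosSemidef :=
            hessian_psd isOpen_ball hx.1 (hv.mono ball_subset_closedBall) hx.2.2
          rw [abs_of_nonneg (posSemidef_det_nonneg hpsd)]
          exact hkey x hx
      _ = ENNReal.ofReal C * volume P := setLIntegral_const P _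
  -- volume of the small ball
  have hball : volume (ball (0 : EuclideanSpace ℝ (Fin n)) (ε/2)) =
      ENNReal.ofReal ((ε/2) ^ n) * ω := by
    rw [Measure.addHaar_ball (μ := volume) (0 : EuclideanSpace ℝ (Fin n))
      (by linarith : (0:ℝ) ≤ ε/2), finrank_euclideanSpace_fin, ← hω]
  have hchain : ENNReal.ofReal ((ε/2) ^ n) * ω ≤ ENNReal.ofReal C * volume P := by
    rw [← hball]
    exact le_trans (measure_mono hcover) himg
  have hPvol : ENNReal.ofReal ((ε/2) ^ n) * ω / ENNReal.ofReal C ≤ volume P := by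
    exact ENNReal.div_le_of_le_mul (hchain.trans_eq (mul_comm _ _))
  -- final computation
  have harith : ENNReal.ofReal (ε ^ n / (C₀ * C)) =
      ENNReal.ofReal ((ε/2) ^ n) * ω / ENNReal.ofReal C := by
    have h1 : ε ^ n / (C₀ * C) = ((ε/2) ^ n * ω.toReal) / C := by
      rw [hC₀def, div_pow]
      field_simp
    rw [h1, ENNReal.ofReal_div_of_pos hC, ENNReal.ofReal_mul (by positivity),
      ENNReal.ofReal_toReal hωt]
  rw [harith]
  exact hPvol.trans (measure_mono hPsub)
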